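/- arXiv:2501.03837 — 2 statements merged into one kernel-verified Lean document; each statement's English description precedes it below -/
import Mathlib

section
/- Let σ be the q-shift automorphism of F[y] sending y to qy, where F has characteristic zero and q ∈ F is neither zero nor a root of unity. A polynomial p ∈ F[y] is σ-special (i.e., p | σ^ℓ(p) for some nonzero integer ℓ) if and only if p = c·y^k for some c ∈ F and k ∈ ℕ. -/
/-!
Every power `σ ^ ℓ` is the substitution `y ↦ q ^ ℓ y`, which scales the coefficient of `y ^ n`
by `(q ^ ℓ) ^ n` and preserves the degree. So `p ∣ σ ^ ℓ p` forces `σ ^ ℓ p = u p` for a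
constant `u`, i.e. `(q ^ ℓ) ^ n = u` at every `n` in the support of `p`. Since `q ^ ℓ` is not a
root of unity for `ℓ ≠ 0`, its powers are pairwise distinct, so the support has at most one element.
-/

open Polynomial

lemma not_isOfFinOrder_zpow {G : Type*} [DivisionMonoid G] {a : G} (ha : ¬IsOfFinOrder a)
    {ℓ : ℤ} (hℓ : ℓ ≠ 0) : ¬IsOfFinOrder (a ^ ℓ) := by
  intro hfin
  obtain ⟨n, hn, hpow⟩ := isOfFinOrder_iff_zpow_eq_one.mp hfin
  exact ha (isOfFinOrder_iff_zpow_eq_one.mpr ⟨ℓ * n, mul_ne_zero hℓ hn, by rwa [zpow_mul]⟩)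

lemma pow_injective_of_not_isOfFinOrder {G₀ : Type*} [GroupWithZero G₀] {a : G₀} (ha0 : a ≠ 0)
    (ha : ¬IsOfFinOrder a) : Function.Injective (a ^ · : ℕ → G₀) := by
  intro m n hmn
  have h : a ^ ((m : ℤ) - n) = 1 := by
    simp only [zpow_sub₀ ha0, zpow_natCast, hmn, div_self (pow_ne_zero n ha0)]
  by_contra hne
  exact ha (isOfFinOrder_iff_zpow_eq_one.mpr ⟨(m : ℤ) - n, by omega, h⟩)

namespace Polynomial

lemma algHom_apply_eq_comp {R : Type*} [CommSemiring R] (f : R[X] →ₐ[R] R[X]) (p : R[X]) :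
    f p = p.comp (f X) := by
  rw [comp_eq_aeval, aeval_algHom_apply, aeval_X_left_apply]

lemma algEquiv_zpow_apply_X {K : Type*} [Field K] (e : K[X] ≃ₐ[K] K[X]) {a : K} (ha : a ≠ 0)
    (he : e X = C a * X) (ℓ : ℤ) : (e ^ ℓ) X = C (a ^ ℓ) * X := by
  -- Read backwards, `hstep` also steps from `m` down to `m - 1`, without computing `e⁻¹ X`.
  have hstep : ∀ m : ℤ, (e ^ (m + 1)) X = C a * (e ^ m) X := fun m => by
    rw [zpow_add_one, AlgEquiv.mul_apply, he, map_mul, ← algebraMap_eq, (e ^ m).commutes]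
  induction ℓ using Int.induction_on with
  | zero => simp
  | succ m ih => rw [hstep, ih, ← mul_assoc, ← C_mul, zpow_add_one₀ ha, mul_comm a]
  | pred m ih =>
    have h := hstep (-(m : ℤ) - 1)
    rw [sub_add_cancel, ih] at h
    rw [zpow_sub_one₀ ha, mul_comm (a ^ _), C_mul, mul_assoc, h, ← mul_assoc, ← C_mul,
      inv_mul_cancel₀ ha, C_1, one_mul]

lemma degree_comp_C_mul_X {R : Type*} [Semiring R] [NoZeroDivisors R] {a : R} (ha : a ≠ 0)
    (p : R[X]) :
    (p.comp (C a * X)).degree = p.degree := by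
  rw [degree_comp (by rw [degree_C_mul_X ha]; exact zero_lt_one), degree_C_mul_X ha, mul_one]

lemma exists_comp_C_mul_X_eq_mul_C {K : Type*} [Field K] {a : K} (ha : a ≠ 0) {p : K[X]}
    (h : p ∣ p.comp (C a * X)) : ∃ u : K, p.comp (C a * X) = p * C u := by
  obtain ⟨v, hv⟩ := associated_of_dvd_of_degree_eq h (degree_comp_C_mul_X ha p).symm
  obtain ⟨u, -, hu⟩ := isUnit_iff.mp v.isUnit
  exact ⟨u, by rw [← hv, ← hu]⟩

lemma exists_eq_C_mul_X_pow_of_dvd_comp_C_mul_X {K : Type*} [Field K] {a : K} (ha0 : a ≠ 0)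
    (ha : ¬IsOfFinOrder a) {p : K[X]} (h : p ∣ p.comp (C a * X)) :
    ∃ (c : K) (k : ℕ), p = C c * X ^ k := by
  obtain ⟨u, hu⟩ := exists_comp_C_mul_X_eq_mul_C ha0 h
  have hpow : ∀ n ∈ p.support, a ^ n = u := fun n hn => by
    have hcoeff := congrArg (coeff · n) hu
    simp only [comp_C_mul_X_coeff, coeff_mul_C] at hcoeff
    exact mul_left_cancel₀ (mem_support_iff.mp hn) hcoeff
  have hcard : p.support.card ≤ 1 := Finset.card_le_one.mpr fun m hm n hn =>
    pow_injective_of_not_isOfFinOrder ha0 ha ((hpow m hm).trans (hpow n hn).symm)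
  obtain ⟨k, c, hp⟩ := card_support_le_one_iff_monomial.mp hcard
  exact ⟨c, k, by rw [hp, C_mul_X_pow_eq_monomial]⟩

end Polynomial

theorem stmt4_general (F : Type*) [Field F] (q : F) (hq0 : q ≠ 0)
    (hqu : ∀ n : ℕ, 0 < n → q ^ n ≠ 1)
    (σ : Polynomial F ≃ₐ[F] Polynomial F)
    (hσ : σ Polynomial.X = Polynomial.C q * Polynomial.X)
    (p : Polynomial F) :
    (∃ ℓ : ℤ, ℓ ≠ 0 ∧ p ∣ (σ ^ ℓ) p) ↔
      ∃ (c : F) (k : ℕ), p = Polynomial.C c * Polynomial.X ^ k := by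
  have hσℓ : ∀ (ℓ : ℤ) (r : F[X]), (σ ^ ℓ) r = r.comp (C (q ^ ℓ) * X) := fun ℓ r => by
    rw [← algEquiv_zpow_apply_X σ hq0 hσ ℓ]
    exact algHom_apply_eq_comp (σ ^ ℓ : F[X] ≃ₐ[F] F[X]).toAlgHom r
  have hq : ¬IsOfFinOrder q := by
    simpa [isOfFinOrder_iff_pow_eq_one] using hqu
  constructor
  · rintro ⟨ℓ, hℓ, hdvd⟩
    rw [hσℓ] at hdvd
    exact exists_eq_C_mul_X_pow_of_dvd_comp_C_mul_X (zpow_ne_zero ℓ hq0)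
      (not_isOfFinOrder_zpow hq hℓ) hdvd
  · rintro ⟨c, k, rfl⟩
    refine ⟨1, one_ne_zero, C (q ^ k), ?_⟩
    rw [hσℓ, zpow_one, mul_comp, C_comp, X_pow_comp, mul_pow, C_pow]
    ring

/-- For the q-shift `σ(y) = q y` (q not zero, not a root of unity), a polynomial
is σ-special iff it equals `c · y^k` for some `c ∈ F` and `k ∈ ℕ`. -/
theorem stmt4 (F : Type*) [Field F] [CharZero F] (q : F) (hq0 : q ≠ 0)
    (hqu : ∀ n : ℕ, 0 < n → q ^ n ≠ 1)
    (σ : Polynomial F ≃ₐ[F] Polynomial F)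
    (hσ : σ Polynomial.X = Polynomial.C q * Polynomial.X)
    (p : Polynomial F) :
    (∃ ℓ : ℤ, ℓ ≠ 0 ∧ p ∣ (σ ^ ℓ) p) ↔
      ∃ (c : F) (k : ℕ), p = Polynomial.C c * Polynomial.X ^ k :=
  stmt4_general F q hq0 hqu σ hσ p
end

section
/- Let F be a field of characteristic zero and q ∈ F neither zero nor a root of unity. An irreducible polynomial p ∈ F[x,y] satisfies p(q^m x, q^n y) = c·p(x,y) for some c ∈ F and integers m, n not both zero if and only if p(x,y) = x^α y^β P(x^λ y^μ) for some polynomial P ∈ F[z] and integers α, β ≥ 0 and λ, μ not both zero (the Laurent monomial x^α y^β P(x^λ y^μ) being a polynomial). -/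
/-!
Scaling `x ↦ a x, y ↦ b y` multiplies the coefficient of `x^i y^j` by `a^i b^j`. So
`p(q^m x, q^n y) = c p` says that `q^(m i + n j) = c` on the support of `p`, and since `q` is not
a root of unity the support lies on a line `m i + n j = const`. With `(λ, μ)` the primitive
direction of that line and `(α, β)` its support point minimising the position along it, the
support lies in `(α, β) + ℕ (λ, μ)`, which is the shape `x^α y^β P(x^λ y^μ)`. Conversely, the
scaling with `(m, n) = (μ, -λ)` extends to the fraction field, where it fixes `x^λ y^μ` and
multiplies `x^α y^β` by a constant.
-/

open MvPolynomial

theorem zpow_injective_of_pow_ne_one {G₀ : Type*} [GroupWithZero G₀] {q : G₀} (hq0 : q ≠ 0)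
    (hqu : ∀ n : ℕ, 0 < n → q ^ n ≠ 1) : Function.Injective fun n : ℤ => q ^ n := by
  have hinf : ¬IsOfFinOrder (Units.mk0 q hq0) := by
    rw [isOfFinOrder_iff_pow_eq_one]
    rintro ⟨n, hn, h⟩
    exact hqu n hn (by simpa [Units.ext_iff] using h)
  intro a b hab
  exact injective_zpow_iff_not_isOfFinOrder.mpr hinf (Units.ext (by simpa using hab))

theorem Int.exists_isCoprime_forall_mul_eq_of_mul_add_mul_eq_zero {m n : ℤ}
    (hmn : ¬(m = 0 ∧ n = 0)) :
    ∃ l μ : ℤ, IsCoprime l μ ∧ ∀ d₀ d₁ : ℤ, m * d₀ + n * d₁ = 0 → l * d₁ = μ * d₀ := by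
  obtain ⟨g, m', n', hg, hcop, rfl, rfl⟩ := Int.exists_gcd_one' (Int.gcd_pos_iff.mpr (by tauto))
  refine ⟨n', -m', (Int.isCoprime_iff_gcd_eq_one.mpr hcop).symm.neg_right, fun d₀ d₁ hd => ?_⟩
  have : (g : ℤ) * (m' * d₀ + n' * d₁) = 0 := by linear_combination hd
  linear_combination (mul_eq_zero.mp this).resolve_left (by positivity)

theorem MvPolynomial.coeff_aeval_C_mul_X {R σ : Type*} [CommSemiring R] (a : σ → R)
    (p : MvPolynomial σ R) (s : σ →₀ ℕ) :
    coeff s (aeval (fun i => C (a i) * X i) p) = (s.prod fun i e => a i ^ e) * coeff s p := by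
  classical
  induction p using MvPolynomial.induction_on' with
  | monomial u r =>
    have : aeval (fun i => C (a i) * X i) (monomial u r) =
        monomial u ((u.prod fun i e => a i ^ e) * r) := by
      simp only [monomial_eq, Finsupp.prod, map_mul, map_prod, map_pow, aeval_C, aeval_X,
        algebraMap_eq, mul_pow, Finset.prod_mul_distrib]
      ring
    rw [this, coeff_monomial, coeff_monomial]
    split_ifs with h
    · rw [h]
    · rw [mul_zero]
  | add p₁ p₂ h₁ h₂ => rw [map_add, coeff_add, coeff_add, h₁, h₂, mul_add]

theorem MvPolynomial.coeff_aeval_C_mul_X_fin_two {R : Type*} [CommSemiring R] (a b : R)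
    (p : MvPolynomial (Fin 2) R) (s : Fin 2 →₀ ℕ) :
    coeff s (aeval ![C a * X 0, C b * X 1] p) = a ^ s 0 * b ^ s 1 * coeff s p := by
  have : ![C a * X 0, C b * X 1] = fun i => C (![a, b] i) * (X i : MvPolynomial (Fin 2) R) := by
    ext1 i; fin_cases i <;> rfl
  rw [this, coeff_aeval_C_mul_X, Finsupp.prod_fintype _ _ (by simp), Fin.prod_univ_two]
  rfl

theorem MvPolynomial.aeval_C_mul_X_fin_two_injective {R : Type*} [CommRing R] [IsDomain R]
    {a b : R} (ha : a ≠ 0) (hb : b ≠ 0) :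
    Function.Injective
      (aeval ![C a * X 0, C b * X 1] : MvPolynomial (Fin 2) R → MvPolynomial (Fin 2) R) := by
  refine (injective_iff_map_eq_zero _).mpr fun p hp => MvPolynomial.ext _ _ fun s => ?_
  have := congrArg (coeff s) hp
  rw [coeff_aeval_C_mul_X_fin_two, coeff_zero] at this
  simpa [ha, hb] using this

theorem MvPolynomial.pow_mul_pow_eq_of_aeval_eq_C_mul {R : Type*} [CommRing R] [IsDomain R]
    {a b c : R} {p : MvPolynomial (Fin 2) R} (h : aeval ![C a * X 0, C b * X 1] p = C c * p)
    {s : Fin 2 →₀ ℕ} (hs : s ∈ p.support) : a ^ s 0 * b ^ s 1 = c := by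
  have := congrArg (coeff s) h
  rw [coeff_aeval_C_mul_X_fin_two, coeff_C_mul] at this
  exact mul_right_cancel₀ (mem_support_iff.mp hs) this

theorem pow_mul_pow_eq_mul_zpow_pow {K : Type*} [CommGroupWithZero K] {A B : K} (hA : A ≠ 0)
    (hB : B ≠ 0) {s₀ s₁ b₀ b₁ k : ℕ} {l μ : ℤ} (h₀ : (s₀ : ℤ) = b₀ + l * k)
    (h₁ : (s₁ : ℤ) = b₁ + μ * k) : A ^ s₀ * B ^ s₁ = A ^ b₀ * B ^ b₁ * (A ^ l * B ^ μ) ^ k := by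
  simp only [← zpow_natCast, h₀, h₁, zpow_add₀ hA, zpow_add₀ hB, mul_zpow, ← zpow_mul]
  exact mul_mul_mul_comm (G := K) ..

section FractionField

variable {F K : Type*} [Field F] [Field K] [Algebra (MvPolynomial (Fin 2) F) K]
  [IsFractionRing (MvPolynomial (Fin 2) F) K] [Algebra F K]
  [IsScalarTower F (MvPolynomial (Fin 2) F) K]

local notation "ι" => algebraMap (MvPolynomial (Fin 2) F) K

theorem exists_eq_laurent_of_support_collinear {p : MvPolynomial (Fin 2) F} {l μ : ℤ}
    (hlμ : IsCoprime l μ)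
    (hline : ∀ s ∈ p.support, ∀ s' ∈ p.support, l * ((s 1 : ℤ) - s' 1) = μ * ((s 0 : ℤ) - s' 0)) :
    ∃ (P : Polynomial F) (α β : ℕ),
      ι p = ι (X 0) ^ α * ι (X 1) ^ β * Polynomial.aeval (ι (X 0) ^ l * ι (X 1) ^ μ) P := by
  rcases p.support.eq_empty_or_nonempty with hp | hp
  · exact ⟨0, 0, 0, by simp [support_eq_empty.mp hp]⟩
  obtain ⟨u, v, huv⟩ := hlμ
  -- the position of `s` along the line, measured by a linear form taking the value 1 on `(l, μ)`
  let t : (Fin 2 →₀ ℕ) → ℤ := fun s => u * s 0 + v * s 1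
  obtain ⟨b, hb, hbmin⟩ := p.support.exists_min_image t hp
  let τ : (Fin 2 →₀ ℕ) → ℕ := fun s => (t s - t b).toNat
  have hτ : ∀ s ∈ p.support, (τ s : ℤ) = t s - t b := fun s hs =>
    Int.toNat_of_nonneg (sub_nonneg.mpr (hbmin s hs))
  have hA : ι (X 0) ≠ 0 :=
    (map_ne_zero_iff _ (IsFractionRing.injective _ K)).mpr (X_ne_zero 0)
  have hB : ι (X 1) ≠ 0 :=
    (map_ne_zero_iff _ (IsFractionRing.injective _ K)).mpr (X_ne_zero 1)
  refine ⟨∑ s ∈ p.support, Polynomial.monomial (τ s) (coeff s p), b 0, b 1, ?_⟩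
  conv_lhs => rw [← support_sum_monomial_coeff p]
  rw [map_sum, map_sum, Finset.mul_sum]
  refine Finset.sum_congr rfl fun s hs => ?_
  have hl := hline s hs b hb
  have hpow : ι (X 0) ^ s 0 * ι (X 1) ^ s 1 =
      ι (X 0) ^ b 0 * ι (X 1) ^ b 1 * (ι (X 0) ^ l * ι (X 1) ^ μ) ^ τ s :=
    pow_mul_pow_eq_mul_zpow_pow hA hB
      (by rw [hτ s hs]; linear_combination -v * hl - ((s 0 : ℤ) - b 0) * huv)
      (by rw [hτ s hs]; linear_combination u * hl - ((s 1 : ℤ) - b 1) * huv)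
  rw [monomial_eq, Finsupp.prod_fintype _ _ (fun i => pow_zero _), Fin.prod_univ_two,
    map_mul, map_mul, map_pow, map_pow, Polynomial.aeval_monomial, hpow,
    ← MvPolynomial.algebraMap_eq, ← IsScalarTower.algebraMap_apply]
  ring

theorem aeval_C_mul_X_eq_C_mul_of_eq_laurent {a b : F} (ha : a ≠ 0) (hb : b ≠ 0) {l μ : ℤ}
    (hab : a ^ l * b ^ μ = 1) {p : MvPolynomial (Fin 2) F} {P : Polynomial F} {α β : ℕ}
    (hp : ι p = ι (X 0) ^ α * ι (X 1) ^ β * Polynomial.aeval (ι (X 0) ^ l * ι (X 1) ^ μ) P) :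
    aeval ![C a * X 0, C b * X 1] p = C (a ^ α * b ^ β) * p := by
  set σ : MvPolynomial (Fin 2) F →ₐ[F] MvPolynomial (Fin 2) F := aeval ![C a * X 0, C b * X 1]
  have hinj : Function.Injective ((IsScalarTower.toAlgHom F _ K).comp σ) :=
    (IsFractionRing.injective _ K).comp (aeval_C_mul_X_fin_two_injective ha hb)
  let ψ : K →ₐ[F] K := IsFractionRing.liftAlgHom hinj
  have hψ : ∀ x, ψ (ι x) = ι (σ x) := IsFractionRing.lift_algebraMap hinj
  have hCF : ∀ r : F, ι (C r) = algebraMap F K r := fun r => by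
    rw [← MvPolynomial.algebraMap_eq, ← IsScalarTower.algebraMap_apply]
  have hψ₀ : ψ (ι (X 0)) = algebraMap F K a * ι (X 0) := by
    rw [hψ, aeval_X]; simp [hCF]
  have hψ₁ : ψ (ι (X 1)) = algebraMap F K b * ι (X 1) := by
    rw [hψ, aeval_X]; simp [hCF]
  have hfix : ψ (ι (X 0) ^ l * ι (X 1) ^ μ) = ι (X 0) ^ l * ι (X 1) ^ μ := by
    rw [map_mul, map_zpow₀, map_zpow₀, hψ₀, hψ₁, mul_zpow, mul_zpow, mul_mul_mul_comm,
      ← map_zpow₀, ← map_zpow₀, ← map_mul, hab, map_one, one_mul]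
  apply IsFractionRing.injective _ K
  rw [← hψ, map_mul ι, hCF, hp, map_mul, map_mul, map_pow, map_pow,
    ← Polynomial.aeval_algHom_apply, hfix, hψ₀, hψ₁, map_mul, map_pow, map_pow]
  ring

theorem exists_eq_laurent_of_aeval_eq_C_mul {q : F} (hq0 : q ≠ 0)
    (hqu : ∀ n : ℕ, 0 < n → q ^ n ≠ 1) {p : MvPolynomial (Fin 2) F} {c : F} {m n : ℤ}
    (hmn : ¬(m = 0 ∧ n = 0)) (h : aeval ![C (q ^ m) * X 0, C (q ^ n) * X 1] p = C c * p) :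
    ∃ (P : Polynomial F) (α β : ℕ) (l μ : ℤ), ¬(l = 0 ∧ μ = 0) ∧
      ι p = ι (X 0) ^ α * ι (X 1) ^ β * Polynomial.aeval (ι (X 0) ^ l * ι (X 1) ^ μ) P := by
  obtain ⟨l, μ, hlμ, hperp⟩ := Int.exists_isCoprime_forall_mul_eq_of_mul_add_mul_eq_zero hmn
  have hexp : ∀ s ∈ p.support, q ^ (m * s 0 + n * s 1) = c := fun s hs => by
    rw [← pow_mul_pow_eq_of_aeval_eq_C_mul h hs, zpow_add₀ hq0, zpow_mul, zpow_mul,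
      zpow_natCast, zpow_natCast]
  have hline : ∀ s ∈ p.support, ∀ s' ∈ p.support,
      l * ((s 1 : ℤ) - s' 1) = μ * ((s 0 : ℤ) - s' 0) := fun s hs s' hs' =>
    hperp _ _ <| by
      linear_combination
        zpow_injective_of_pow_ne_one hq0 hqu ((hexp s hs).trans (hexp s' hs').symm)
  obtain ⟨P, α, β, hP⟩ := exists_eq_laurent_of_support_collinear (K := K) hlμ hline
  exact ⟨P, α, β, l, μ, fun ⟨hl, hμ⟩ => not_isCoprime_zero_zero (hl ▸ hμ ▸ hlμ), hP⟩

end FractionField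

theorem stmt17_general (F : Type*) [Field F] (q : F) (hq0 : q ≠ 0)
    (hqu : ∀ n : ℕ, 0 < n → q ^ n ≠ 1)
    (p : MvPolynomial (Fin 2) F) :
    (∃ (c : F) (m n : ℤ), ¬(m = 0 ∧ n = 0) ∧
      MvPolynomial.aeval
        ![MvPolynomial.C (q ^ m) * (X 0 : MvPolynomial (Fin 2) F),
          MvPolynomial.C (q ^ n) * (X 1 : MvPolynomial (Fin 2) F)] p =
        MvPolynomial.C c * p) ↔
    (∃ (P : Polynomial F) (α β : ℕ) (l μ : ℤ), ¬(l = 0 ∧ μ = 0) ∧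
      algebraMap (MvPolynomial (Fin 2) F) (FractionRing (MvPolynomial (Fin 2) F)) p =
        (algebraMap (MvPolynomial (Fin 2) F) (FractionRing (MvPolynomial (Fin 2) F))
            (X 0)) ^ α *
        (algebraMap (MvPolynomial (Fin 2) F) (FractionRing (MvPolynomial (Fin 2) F))
            (X 1)) ^ β *
        Polynomial.aeval
          ((algebraMap (MvPolynomial (Fin 2) F) (FractionRing (MvPolynomial (Fin 2) F))
              (X 0)) ^ l *
           (algebraMap (MvPolynomial (Fin 2) F) (FractionRing (MvPolynomial (Fin 2) F))
              (X 1)) ^ μ) P) := by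
  constructor
  · rintro ⟨c, m, n, hmn, h⟩
    exact exists_eq_laurent_of_aeval_eq_C_mul hq0 hqu hmn h
  · rintro ⟨P, α, β, l, μ, hlμ, hp⟩
    refine ⟨_, μ, -l, fun ⟨hμ, hl⟩ => hlμ ⟨neg_eq_zero.mp hl, hμ⟩,
      aeval_C_mul_X_eq_C_mul_of_eq_laurent (zpow_ne_zero _ hq0) (zpow_ne_zero _ hq0) ?_ hp⟩
    rw [← zpow_mul, ← zpow_mul, ← zpow_add₀ hq0, show μ * l + -l * μ = 0 by ring, zpow_zero]

/-- q-shift case characterization of integer-linear irreducible bivariate polynomials: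
`p(q^m x, q^n y) = c p(x,y)` for some `c ∈ F` and integers `m, n` not both zero iff
`p = x^α y^β P(x^λ y^μ)` (in the Laurent sense, interpreted in the fraction field)
for some `P ∈ F[z]`, `α, β ∈ ℕ` and integers `λ, μ` not both zero. -/
theorem stmt17 (F : Type*) [Field F] [CharZero F] (q : F) (hq0 : q ≠ 0)
    (hqu : ∀ n : ℕ, 0 < n → q ^ n ≠ 1)
    (p : MvPolynomial (Fin 2) F) (hp : Irreducible p) :
    (∃ (c : F) (m n : ℤ), ¬(m = 0 ∧ n = 0) ∧
      MvPolynomial.aeval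
        ![MvPolynomial.C (q ^ m) * (X 0 : MvPolynomial (Fin 2) F),
          MvPolynomial.C (q ^ n) * (X 1 : MvPolynomial (Fin 2) F)] p =
        MvPolynomial.C c * p) ↔
    (∃ (P : Polynomial F) (α β : ℕ) (l μ : ℤ), ¬(l = 0 ∧ μ = 0) ∧
      algebraMap (MvPolynomial (Fin 2) F) (FractionRing (MvPolynomial (Fin 2) F)) p =
        (algebraMap (MvPolynomial (Fin 2) F) (FractionRing (MvPolynomial (Fin 2) F))
            (X 0)) ^ α *
        (algebraMap (MvPolynomial (Fin 2) F) (FractionRing (MvPolynomial (Fin 2) F))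
            (X 1)) ^ β *
        Polynomial.aeval
          ((algebraMap (MvPolynomial (Fin 2) F) (FractionRing (MvPolynomial (Fin 2) F))
              (X 0)) ^ l *
           (algebraMap (MvPolynomial (Fin 2) F) (FractionRing (MvPolynomial (Fin 2) F))
              (X 1)) ^ μ) P) :=
  stmt17_general F q hq0 hqu p
end
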